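/- arXiv:1608.01579 — 2 statements merged into one kernel-verified Lean document; each statement's English description precedes it below -/
import Mathlib

section
/- The origin is the only critical point of the map F = (H, J) : R^4 → R^2 with H = q1 q2 − p1 p2 and J = (1/2)(q1^2 + p1^2) − (1/2)(q2^2 + p2^2) lying on the fiber F^{-1}(0,0); that is, if F(x) = (0,0) and the differential DF(x) has rank < 2, then x = 0. -/
/-! Away from the origin the two rows of the Jacobian of `F = (H, J)`, namely
`∇H = (q₂, -p₂, q₁, -p₁)` and `∇J = (q₁, p₁, -q₂, -p₂)`, are orthogonal and both of squared
length `‖x‖²`. So `DF(x) DF(x)ᵀ = ‖x‖² • 1` is invertible and `DF(x)` is onto `ℝ²`. -/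

open Matrix

theorem Matrix.rank_toLin'_of_mul_eq_one {m n K : Type*} [Field K] [Fintype m] [DecidableEq m]
    [Fintype n] [DecidableEq n] {A : Matrix m n K} {B : Matrix n m K} (hAB : A * B = 1) :
    LinearMap.rank (toLin' A) = Fintype.card m := by
  have hsurj : Function.Surjective (toLin' A) :=
    mulVec_surjective_iff_exists_right_inverse.mpr ⟨B, hAB⟩
  rw [LinearMap.rank, rank_range_of_surjective _ hsurj, rank_fun']

def focusFocusJacobian (x : Fin 4 → ℝ) : Matrix (Fin 2) (Fin 4) ℝ :=
  !![x 2, -x 3, x 0, -x 1; x 0, x 1, -x 2, -x 3]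

theorem focusFocusJacobian_mul_transpose (x : Fin 4 → ℝ) :
    focusFocusJacobian x * (focusFocusJacobian x)ᵀ = (x ⬝ᵥ x) • 1 := by
  ext i j
  fin_cases i <;> fin_cases j <;>
    simp [focusFocusJacobian, mul_apply, dotProduct, Fin.sum_univ_four] <;> ring

theorem focusFocusJacobian_mul_eq_one {x : Fin 4 → ℝ} (hx : x ≠ 0) :
    focusFocusJacobian x * ((x ⬝ᵥ x)⁻¹ • (focusFocusJacobian x)ᵀ) = 1 := by
  rw [Matrix.mul_smul, focusFocusJacobian_mul_transpose, smul_smul,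
    inv_mul_cancel₀ (dotProduct_self_eq_zero.not.mpr hx), one_smul]

theorem hasFDerivAt_focusFocus (x : Fin 4 → ℝ) :
    HasFDerivAt (fun y : Fin 4 → ℝ => ![y 0 * y 2 - y 1 * y 3,
      (1/2) * ((y 0)^2 + (y 1)^2) - (1/2) * ((y 2)^2 + (y 3)^2)])
      (toLin' (focusFocusJacobian x)).toContinuousLinearMap x := by
  have hq (j : Fin 4) : HasFDerivAt (fun y : Fin 4 → ℝ => y j) (ContinuousLinearMap.proj j) x :=
    hasFDerivAt_apply (𝕜 := ℝ) j x
  rw [hasFDerivAt_pi']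
  intro i
  fin_cases i
  · refine (((hq 0).mul (hq 2)).sub ((hq 1).mul (hq 3))).congr_fderiv ?_
    ext u
    simp [focusFocusJacobian, dotProduct, Fin.sum_univ_four]
    ring
  · refine ((((hq 0).pow 2).add ((hq 1).pow 2)).const_mul (1/2 : ℝ)).sub
      ((((hq 2).pow 2).add ((hq 3).pow 2)).const_mul (1/2 : ℝ)) |>.congr_fderiv ?_
    ext u
    simp [focusFocusJacobian, dotProduct, Fin.sum_univ_four]
    ring

open Cardinal in
theorem focus_focus_origin_only_critical_point_general
    (F : (Fin 4 → ℝ) → (Fin 2 → ℝ))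
    (hF : ∀ x, F x = ![x 0 * x 2 - x 1 * x 3,
      (1/2) * ((x 0)^2 + (x 1)^2) - (1/2) * ((x 2)^2 + (x 3)^2)])
    (x : Fin 4 → ℝ)
    (hrank : LinearMap.rank (fderiv ℝ F x).toLinearMap < 2) :
    x = 0 := by
  obtain rfl : F = _ := funext hF
  by_contra hx
  rw [(hasFDerivAt_focusFocus x).fderiv, LinearMap.coe_toContinuousLinearMap,
    rank_toLin'_of_mul_eq_one (focusFocusJacobian_mul_eq_one hx)] at hrank
  simp at hrank

open Cardinal in
/-- The origin is the only critical point of F = (H, J),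
H = q1 q2 − p1 p2, J = ½(q1²+p1²) − ½(q2²+p2²), on the fiber F⁻¹(0,0):
if F x = (0,0) and rank DF(x) < 2 then x = 0.
Coordinates on ℝ⁴ are (q1, p1, q2, p2) = (x 0, x 1, x 2, x 3). -/
theorem focus_focus_origin_only_critical_point
    (F : (Fin 4 → ℝ) → (Fin 2 → ℝ))
    (hF : ∀ x, F x = ![x 0 * x 2 - x 1 * x 3,
      (1/2) * ((x 0)^2 + (x 1)^2) - (1/2) * ((x 2)^2 + (x 3)^2)])
    (x : Fin 4 → ℝ) (hfib : F x = 0)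
    (hrank : LinearMap.rank (fderiv ℝ F x).toLinearMap < 2) :
    x = 0 :=
  focus_focus_origin_only_critical_point_general F hF x hrank
end

section
/- Let B ⊂ R^4 ≅ C^2 be an open ball around a fixed point of the circle action t·(z,w) = (e^{it} z, e^{it} w), and suppose ϑ is a smooth closed 1-form defined on B minus a closed set Π (the polar set), invariant under the action, with ϑ(X) = 1 where X is the generator of the action. If p ∈ B \ Π is not the fixed point, then the integral of ϑ over the circle orbit through p equals 2π, and consequently the orbit through p is not null-homotopic in B \ Π; in particular Π cannot be empty. -/
open Complex Real

/-- The rotation by angle t of a point of ℂ², for the diagonal circle action. -/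
noncomputable def rotC2 (t : ℝ) (x : ℂ × ℂ) : ℂ × ℂ :=
  (Complex.exp (t * Complex.I) * x.1, Complex.exp (t * Complex.I) * x.2)

/-- The infinitesimal generator X of the action t·(z,w) = (e^{it}z, e^{it}w). -/
noncomputable def genC2 (x : ℂ × ℂ) : ℂ × ℂ := (Complex.I * x.1, Complex.I * x.2)

/-!
Since `ϑ(X) = 1`, along the orbit `c s = rotC2 (2π s) p` the integrand `ϑ (c s) (c' s)` is
constantly `2π`. By the Poincaré lemma a closed 1-form is exact on convex open sets, so on each
small cell of a grid the integrals along the four edges cancel. Hence the integral along the polygon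
through the points `γ (j / N)` does not change along a homotopy rel endpoints once `1 / N` is below
a Lebesgue number, and for a `C¹` path it equals the integral along the path. A null-homotopy of the
orbit would thus give `2π = 0`. If `Pol` were empty, `ϑ` would be exact on the whole ball, and the
orbit integral would vanish.
-/

open Set Filter Metric MeasureTheory

section ClosedOneForms

variable {E F : Type*} [NormedAddCommGroup E] [NormedSpace ℝ E]
  [NormedAddCommGroup F] [NormedSpace ℝ F]

structure IsClosedOneFormOn (ω : E → E →L[ℝ] F) (U : Set E) : Prop where
  differentiableOn : DifferentiableOn ℝ ω U
  fderiv_apply_comm : ∀ x ∈ U, ∀ v w, fderiv ℝ ω x v w = fderiv ℝ ω x w v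

noncomputable def polygonalIntegral (ω : E → E →L[ℝ] F) (v : ℕ → E) (N : ℕ) : F :=
  ∑ j ∈ Finset.range N, ∫ᶜ x in .segment (v j) (v (j + 1)), ω x

theorem curveIntegral_segment_self (ω : E → E →L[ℝ] F) (a : E) :
    ∫ᶜ x in .segment a a, ω x = 0 := by
  rw [Path.segment_same, curveIntegral_refl]

theorem polygonalIntegral_congr {ω : E → E →L[ℝ] F} {v w : ℕ → E} {N : ℕ}
    (h : ∀ j ≤ N, v j = w j) : polygonalIntegral ω v N = polygonalIntegral ω w N :=
  Finset.sum_congr rfl fun j hj => by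
    have hj := Finset.mem_range.1 hj
    rw [h j hj.le, h (j + 1) hj]

theorem polygonalIntegral_const (ω : E → E →L[ℝ] F) (a : E) (N : ℕ) :
    polygonalIntegral ω (fun _ => a) N = 0 := by
  simp [polygonalIntegral]

theorem IsCompact.exists_forall_mapsTo_ball_convex {X : Type*} [PseudoMetricSpace X]
    {K : Set X} (hK : IsCompact K) {G : X → E} (hG : Continuous G) {U : Set E}
    (hU : IsOpen U) (hGU : MapsTo G K U) :
    ∃ δ > 0, ∀ q ∈ K, ∃ C ⊆ U, IsOpen C ∧ Convex ℝ C ∧ MapsTo G (ball q δ) C := by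
  set cover : {z : E × ℝ // ball z.1 z.2 ⊆ U} → Set X := fun z => G ⁻¹' ball z.1.1 z.1.2
  have hcover : K ⊆ ⋃ z, cover z := fun q hq => by
    obtain ⟨ε, hε, hεU⟩ := Metric.isOpen_iff.1 hU (G q) (hGU hq)
    exact mem_iUnion.2 ⟨⟨(G q, ε), hεU⟩, mem_ball_self hε⟩
  obtain ⟨δ, hδ, hδcover⟩ :=
    lebesgue_number_lemma_of_metric hK (fun z => isOpen_ball.preimage hG) hcover
  refine ⟨δ, hδ, fun q hq => ?_⟩
  obtain ⟨⟨⟨z, ε⟩, hεU⟩, hqz⟩ := hδcover q hq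
  exact ⟨ball z ε, hεU, isOpen_ball, convex_ball z ε, fun y hy => hqz hy⟩

theorem natCast_div_mem_Icc {j N : ℕ} (hj : j ≤ N) : (j : ℝ) / N ∈ Icc 0 1 :=
  ⟨by positivity, div_le_one_of_le₀ (by exact_mod_cast hj) (by positivity)⟩

theorem uIcc_natCast_div_subset {N j : ℕ} {δ : ℝ} (hj : j < N) (hN : 1 / (N : ℝ) < δ) :
    uIcc ((j : ℝ) / N) (((j + 1 : ℕ) : ℝ) / N) ⊆ Icc 0 1 ∩ ball ((j : ℝ) / N) δ := by
  rw [uIcc_of_le (by gcongr; simp)]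
  rintro t ⟨ht₀, ht₁⟩
  refine ⟨⟨(natCast_div_mem_Icc hj.le).1.trans ht₀, ht₁.trans (natCast_div_mem_Icc hj).2⟩, ?_⟩
  rw [mem_ball, Real.dist_eq, abs_of_nonneg (sub_nonneg.2 ht₀)]
  refine lt_of_le_of_lt ?_ hN
  rw [Nat.cast_succ, add_div] at ht₁
  linarith

namespace IsClosedOneFormOn

variable {ω : E → E →L[ℝ] F} {U C : Set E}

theorem mono (hω : IsClosedOneFormOn ω U) (hCU : C ⊆ U) : IsClosedOneFormOn ω C :=
  ⟨hω.differentiableOn.mono hCU, fun x hx => hω.fderiv_apply_comm x (hCU hx)⟩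

theorem hasFDerivWithinAt (hω : IsClosedOneFormOn ω C) (hCo : IsOpen C) {x : E} (hx : x ∈ C) :
    HasFDerivWithinAt ω (fderiv ℝ ω x) C x :=
  (hω.differentiableOn.differentiableAt (hCo.mem_nhds hx)).hasFDerivAt.hasFDerivWithinAt

theorem curveIntegral_segment_add (hω : IsClosedOneFormOn ω C) (hCo : IsOpen C)
    (hC : Convex ℝ C) {a b c : E} (ha : a ∈ C) (hb : b ∈ C) (hc : c ∈ C) :
    (∫ᶜ x in .segment a b, ω x) + ∫ᶜ x in .segment b c, ω x = ∫ᶜ x in .segment a c, ω x :=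
  hC.curveIntegral_segment_add_eq_of_hasFDerivWithinAt_symmetric
    (fun _ => hω.hasFDerivWithinAt hCo) (fun x hx u _ v _ => hω.fderiv_apply_comm x hx u v)
    ha hb hc

theorem curveIntegral_segment_square (hω : IsClosedOneFormOn ω C) (hCo : IsOpen C)
    (hC : Convex ℝ C) {a b c d : E} (ha : a ∈ C) (hb : b ∈ C) (hc : c ∈ C) (hd : d ∈ C) :
    (∫ᶜ x in .segment a b, ω x) + ∫ᶜ x in .segment b d, ω x =
      (∫ᶜ x in .segment a c, ω x) + ∫ᶜ x in .segment c d, ω x := by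
  rw [hω.curveIntegral_segment_add hCo hC ha hb hd, hω.curveIntegral_segment_add hCo hC ha hc hd]

theorem integral_eq_curveIntegral_segment [CompleteSpace F] (hω : IsClosedOneFormOn ω C)
    (hCo : IsOpen C) (hC : Convex ℝ C) {c c' : ℝ → E} {a b : ℝ}
    (hc : ∀ t ∈ uIcc a b, HasDerivAt c (c' t) t) (hcC : MapsTo c (uIcc a b) C)
    (hint : IntervalIntegrable (fun t => ω (c t) (c' t)) volume a b) :
    ∫ t in a..b, ω (c t) (c' t) = ∫ᶜ x in .segment (c a) (c b), ω x := by
  have hprim : ∀ x ∈ C, HasFDerivAt (∫ᶜ y in .segment (c a) ·, ω y) (ω x) x := fun x hx =>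
    (hC.hasFDerivWithinAt_curveIntegral_segment_of_hasFDerivWithinAt_symmetric
      (fun _ => hω.hasFDerivWithinAt hCo) (fun y hy u _ v _ => hω.fderiv_apply_comm y hy u v)
      (hcC left_mem_uIcc) hx).hasFDerivAt (hCo.mem_nhds hx)
  rw [intervalIntegral.integral_eq_sub_of_hasDerivAt
    (fun t ht => (hprim _ (hcC ht)).comp_hasDerivAt t (hc t ht)) hint, Function.comp_apply,
    Function.comp_apply, curveIntegral_segment_self, sub_zero]

theorem polygonalIntegral_eq (hω : IsClosedOneFormOn ω U) {v w : ℕ → E} {N : ℕ}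
    (h0 : v 0 = w 0) (hN : v N = w N)
    (hvw : ∀ j < N, ∃ C ⊆ U, IsOpen C ∧ Convex ℝ C ∧
      v j ∈ C ∧ v (j + 1) ∈ C ∧ w j ∈ C ∧ w (j + 1) ∈ C) :
    polygonalIntegral ω v N = polygonalIntegral ω w N := by
  set D : ℕ → F := fun j => ∫ᶜ x in .segment (v j) (w j), ω x
  have hcell : ∀ j ∈ Finset.range N, ((∫ᶜ x in .segment (v j) (v (j + 1)), ω x) -
      ∫ᶜ x in .segment (w j) (w (j + 1)), ω x) = D j - D (j + 1) := by
    intro j hj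
    obtain ⟨C, hCU, hCo, hC, hvj, hvj', hwj, hwj'⟩ := hvw j (Finset.mem_range.1 hj)
    rw [sub_eq_sub_iff_add_eq_add]
    exact (hω.mono hCU).curveIntegral_segment_square hCo hC hvj hvj' hwj hwj'
  have hD : ∀ j, v j = w j → D j = 0 := fun j h => by
    simp only [D]
    rw [h, curveIntegral_segment_self]
  rw [← sub_eq_zero, polygonalIntegral, polygonalIntegral, ← Finset.sum_sub_distrib,
    Finset.sum_congr rfl hcell, Finset.sum_range_sub', hD 0 h0, hD N hN, sub_zero]

theorem eventually_polygonalIntegral_eq_of_homotopy (hω : IsClosedOneFormOn ω U)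
    (hU : IsOpen U) {x y : E} {γ₀ γ₁ : Path x y} (H : γ₀.Homotopy γ₁) (hHU : ∀ q, H q ∈ U) :
    ∀ᶠ N : ℕ in atTop, polygonalIntegral ω (fun j => γ₀.extend (j / N)) N =
      polygonalIntegral ω (fun j => γ₁.extend (j / N)) N := by
  set G : ℝ × ℝ → E := fun q => H (projIcc 0 1 zero_le_one q.1, projIcc 0 1 zero_le_one q.2)
  have hG : Continuous G := H.continuous.comp (continuous_projIcc.prodMap continuous_projIcc)
  obtain ⟨δ, hδ, hloc⟩ :=
    (isCompact_Icc.prod isCompact_Icc).exists_forall_mapsTo_ball_convex hG hU fun q _ => hHU _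
  filter_upwards [eventually_gt_atTop 0,
    tendsto_one_div_atTop_nhds_zero_nat.eventually (gt_mem_nhds hδ)] with N hN hNδ
  set row : ℕ → ℕ → E := fun i j => G (i / N, j / N)
  have hstep : ∀ i < N, polygonalIntegral ω (row (i + 1)) N = polygonalIntegral ω (row i) N := by
    intro i hi
    refine hω.polygonalIntegral_eq (by simp [row, G]) (by simp [row, G, hN.ne']) fun j hj => ?_
    have hI := uIcc_natCast_div_subset hi hNδ
    have hJ := uIcc_natCast_div_subset hj hNδ
    obtain ⟨C, hCU, hCo, hC, hGC⟩ :=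
      hloc (i / N, j / N) ⟨(hI left_mem_uIcc).1, (hJ left_mem_uIcc).1⟩
    have hcorner : ∀ a ∈ uIcc ((i : ℝ) / N) (((i + 1 : ℕ) : ℝ) / N),
        ∀ b ∈ uIcc ((j : ℝ) / N) (((j + 1 : ℕ) : ℝ) / N), G (a, b) ∈ C := fun a ha b hb =>
      hGC (ball_prod_same ((i : ℝ) / N) ((j : ℝ) / N) δ ▸ mk_mem_prod (hI ha).2 (hJ hb).2)
    exact ⟨C, hCU, hCo, hC, hcorner _ right_mem_uIcc _ left_mem_uIcc,
      hcorner _ right_mem_uIcc _ right_mem_uIcc, hcorner _ left_mem_uIcc _ left_mem_uIcc,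
      hcorner _ left_mem_uIcc _ right_mem_uIcc⟩
  have hrows : ∀ i ≤ N, polygonalIntegral ω (row i) N = polygonalIntegral ω (row 0) N := by
    intro i
    induction i with
    | zero => simp
    | succ i ih => intro hi; rw [hstep i hi, ih (by omega)]
  convert (hrows N le_rfl).symm using 2 <;> ext j
  · simp [row, G, Path.extend, IccExtend]
  · simp [row, G, Path.extend, IccExtend, hN.ne']

theorem eventually_polygonalIntegral_eq_integral [CompleteSpace F] (hω : IsClosedOneFormOn ω U)
    (hU : IsOpen U) {c c' : ℝ → E} (hc : ∀ t, HasDerivAt c (c' t) t) (hc' : Continuous c')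
    (hcU : MapsTo c (Icc 0 1) U) :
    ∀ᶠ N : ℕ in atTop, polygonalIntegral ω (fun j => c (j / N)) N =
      ∫ t in (0 : ℝ)..1, ω (c t) (c' t) := by
  have hcont : Continuous c := continuous_iff_continuousAt.2 fun t => (hc t).continuousAt
  have hint : ContinuousOn (fun t => ω (c t) (c' t)) (Icc 0 1) :=
    (hω.differentiableOn.continuousOn.comp hcont.continuousOn hcU).clm_apply hc'.continuousOn
  obtain ⟨δ, hδ, hloc⟩ := isCompact_Icc.exists_forall_mapsTo_ball_convex hcont hU hcU
  filter_upwards [eventually_gt_atTop 0,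
    tendsto_one_div_atTop_nhds_zero_nat.eventually (gt_mem_nhds hδ)] with N hN hNδ
  have hpiece : ∀ j < N, ∫ t in (j / N : ℝ)..((j + 1 : ℕ) / N : ℝ), ω (c t) (c' t) =
      ∫ᶜ x in .segment (c (j / N)) (c ((j + 1 : ℕ) / N)), ω x := by
    intro j hj
    have hJ := uIcc_natCast_div_subset hj hNδ
    obtain ⟨C, hCU, hCo, hC, hcC⟩ := hloc _ (hJ left_mem_uIcc).1
    exact (hω.mono hCU).integral_eq_curveIntegral_segment hCo hC (fun t _ => hc t)
      (fun t ht => hcC (hJ ht).2) ((hint.mono fun t ht => (hJ ht).1).intervalIntegrable)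
  have hends : (0 : ℝ) = ((0 : ℕ) : ℝ) / N ∧ (1 : ℝ) = (N : ℝ) / N := by
    simp [hN.ne']
  rw [hends.1, hends.2,
    ← intervalIntegral.sum_integral_adjacent_intervals (a := fun j : ℕ => (j : ℝ) / N)]
  · exact Finset.sum_congr rfl fun j hj => (hpiece j (Finset.mem_range.1 hj)).symm
  · intro j hj
    exact (hint.mono fun t ht => (uIcc_natCast_div_subset hj hNδ ht).1).intervalIntegrable

theorem integral_eq_zero_of_convex [CompleteSpace F] (hω : IsClosedOneFormOn ω C)
    (hCo : IsOpen C) (hC : Convex ℝ C) {c c' : ℝ → E} {a b : ℝ}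
    (hc : ∀ t ∈ uIcc a b, HasDerivAt c (c' t) t) (hcC : MapsTo c (uIcc a b) C)
    (hint : IntervalIntegrable (fun t => ω (c t) (c' t)) volume a b) (hab : c a = c b) :
    ∫ t in a..b, ω (c t) (c' t) = 0 := by
  rw [hω.integral_eq_curveIntegral_segment hCo hC hc hcC hint, hab, curveIntegral_segment_self]

theorem integral_eq_of_homotopy [CompleteSpace F] (hω : IsClosedOneFormOn ω U) (hU : IsOpen U)
    {c₀ c₀' c₁ c₁' : ℝ → E} (hc₀ : ∀ t, HasDerivAt c₀ (c₀' t) t) (hc₀' : Continuous c₀')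
    (hc₁ : ∀ t, HasDerivAt c₁ (c₁' t) t) (hc₁' : Continuous c₁') {x y : E} {γ₀ γ₁ : Path x y}
    (hγ₀ : ∀ t, γ₀ t = c₀ t) (hγ₁ : ∀ t, γ₁ t = c₁ t) (H : γ₀.Homotopy γ₁) (hHU : ∀ q, H q ∈ U) :
    ∫ t in (0 : ℝ)..1, ω (c₀ t) (c₀' t) = ∫ t in (0 : ℝ)..1, ω (c₁ t) (c₁' t) := by
  have hc₀U : MapsTo c₀ (Icc 0 1) U := fun t ht => by
    simpa [hγ₀] using hHU (0, ⟨t, ht⟩)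
  have hc₁U : MapsTo c₁ (Icc 0 1) U := fun t ht => by
    simpa [hγ₁] using hHU (1, ⟨t, ht⟩)
  obtain ⟨N, e₀, e₁, eH⟩ := ((hω.eventually_polygonalIntegral_eq_integral hU hc₀ hc₀' hc₀U).and
    ((hω.eventually_polygonalIntegral_eq_integral hU hc₁ hc₁' hc₁U).and
      (hω.eventually_polygonalIntegral_eq_of_homotopy hU H hHU))).exists
  have hvertices : ∀ {γ : Path x y} {c : ℝ → E}, (∀ t, γ t = c t) →
      polygonalIntegral ω (fun j => γ.extend (j / N)) N =
        polygonalIntegral ω (fun j => c (j / N)) N := fun hγ =>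
    polygonalIntegral_congr fun j hj => (Path.extend_apply _ (natCast_div_mem_Icc hj)).trans (hγ _)
  rw [← e₀, ← e₁, ← hvertices hγ₀, ← hvertices hγ₁, eH]

end IsClosedOneFormOn

end ClosedOneForms

theorem rotC2_zero (x : ℂ × ℂ) : rotC2 0 x = x := by
  simp [rotC2]

theorem rotC2_two_pi (x : ℂ × ℂ) : rotC2 (2 * π) x = x := by
  simp [rotC2, exp_two_pi_mul_I]

theorem hasDerivAt_rotC2_mul (k : ℝ) (x : ℂ × ℂ) (t : ℝ) :
    HasDerivAt (fun s => rotC2 (k * s) x) (k • genC2 (rotC2 (k * t) x)) t := by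
  have hexp : HasDerivAt (fun s : ℝ => exp ((k * s : ℝ) * I))
      (exp ((k * t : ℝ) * I) * (k * I)) t := by
    simpa using (((hasDerivAt_id t).const_mul k).ofReal_comp.mul_const I).cexp
  refine ((hexp.mul_const x.1).prodMk (hexp.mul_const x.2)).congr_deriv ?_
  simp only [genC2, rotC2, Prod.smul_mk, Complex.real_smul, Prod.mk.injEq]
  constructor <;> ring

theorem orbit_integral_eq_two_pi_and_not_nullhomotopic_general
    (r : ℝ) (Pol : Set (ℂ × ℂ)) (hPol : IsClosed Pol)
    (B : Set (ℂ × ℂ)) (hB : B = Metric.ball (0 : ℂ × ℂ) r)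
    (ϑ : (ℂ × ℂ) → (ℂ × ℂ) →L[ℝ] ℝ)
    -- the domain B \ Pol is invariant under the action:
    (hdominv : ∀ (t : ℝ) (x : ℂ × ℂ), x ∈ B \ Pol → rotC2 t x ∈ B \ Pol)
    -- ϑ is closed on B \ Pol:
    (hϑdiff : DifferentiableOn ℝ ϑ (B \ Pol))
    (hclosed : ∀ x ∈ B \ Pol, ∀ v w : ℂ × ℂ,
      fderiv ℝ ϑ x v w = fderiv ℝ ϑ x w v)
    -- theta(X) = 1 on B \ Pol:
    (hpair : ∀ x ∈ B \ Pol, ϑ x (genC2 x) = 1)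
    (p : ℂ × ℂ) (hp : p ∈ B \ Pol) :
    (∫ t in (0:ℝ)..(2 * π), ϑ (rotC2 t p) (genC2 (rotC2 t p))) = 2 * π ∧
    (∀ loop : Path (X := {x : ℂ × ℂ // x ∈ B \ Pol}) ⟨p, hp⟩ ⟨p, hp⟩,
      (∀ s : unitInterval, (loop s : ℂ × ℂ) = rotC2 (2 * π * s) p) →
      ¬ loop.Homotopic (Path.refl (⟨p, hp⟩ : {x : ℂ × ℂ // x ∈ B \ Pol}))) ∧
    Pol.Nonempty := by
  have hU : IsOpen (B \ Pol) := hB ▸ isOpen_ball.sdiff hPol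
  have hω : IsClosedOneFormOn ϑ (B \ Pol) := ⟨hϑdiff, hclosed⟩
  set c : ℝ → ℂ × ℂ := fun s => rotC2 (2 * π * s) p
  set c' : ℝ → ℂ × ℂ := fun s => (2 * π) • genC2 (c s)
  have hc : ∀ s, HasDerivAt c (c' s) s := hasDerivAt_rotC2_mul (2 * π) p
  have hc' : Continuous c' := by
    simp only [c', c, rotC2, genC2]
    fun_prop
  have hcU : ∀ s, c s ∈ B \ Pol := fun s => hdominv _ p hp
  have hϑc : ∀ s, ϑ (c s) (c' s) = 2 * π := fun s => by
    simp [c', hpair _ (hcU s)]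
  have horbit : ∫ s in (0 : ℝ)..1, ϑ (c s) (c' s) = 2 * π := by simp [hϑc]
  refine ⟨by simp [hpair _ (hdominv _ p hp)], fun loop hloop ⟨H⟩ => ?_, ?_⟩
  · refine two_pi_pos.ne' (horbit.symm.trans ?_)
    simpa using hω.integral_eq_of_homotopy hU hc hc' (hasDerivAt_const · p) continuous_const
      (γ₀ := loop.map continuous_subtype_val) hloop (fun _ => rfl)
      (H.map ⟨Subtype.val, continuous_subtype_val⟩) fun q => (H q).2
  · rw [nonempty_iff_ne_empty]
    rintro rfl
    have hball : Convex ℝ (B \ ∅) := by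
      rw [sdiff_empty, hB]
      exact convex_ball 0 r
    refine two_pi_pos.ne' (horbit.symm.trans ?_)
    refine hω.integral_eq_zero_of_convex hU hball (fun s _ => hc s) (fun s _ => hcU s)
      (by simp only [hϑc]; exact intervalIntegrable_const) ?_
    simp [c, rotC2_zero, rotC2_two_pi]

/-- Let B ⊂ ℂ² be an open ball around the fixed point 0 of the diagonal circle
action, Pol a closed set, and ϑ a closed, invariant 1-form on B \ Pol with
theta(X) = 1.  Then for any p ∈ B \ Pol the integral of ϑ over the circle orbit
through p equals 2π; consequently any loop tracing this orbit is not
null-homotopic in B \ Pol, and in particular Pol is nonempty. -/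
theorem orbit_integral_eq_two_pi_and_not_nullhomotopic
    (r : ℝ) (hr : 0 < r) (Pol : Set (ℂ × ℂ)) (hPol : IsClosed Pol)
    (B : Set (ℂ × ℂ)) (hB : B = Metric.ball (0 : ℂ × ℂ) r)
    (ϑ : (ℂ × ℂ) → (ℂ × ℂ) →L[ℝ] ℝ)
    -- the domain B \ Pol is invariant under the action:
    (hdominv : ∀ (t : ℝ) (x : ℂ × ℂ), x ∈ B \ Pol → rotC2 t x ∈ B \ Pol)
    -- ϑ is invariant under the action:
    (hforminv : ∀ (t : ℝ) (x v : ℂ × ℂ), x ∈ B \ Pol →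
      ϑ (rotC2 t x) (Complex.exp (t * Complex.I) * v.1,
        Complex.exp (t * Complex.I) * v.2) = ϑ x v)
    -- ϑ is closed on B \ Pol:
    (hϑdiff : DifferentiableOn ℝ ϑ (B \ Pol))
    (hclosed : ∀ x ∈ B \ Pol, ∀ v w : ℂ × ℂ,
      fderiv ℝ ϑ x v w = fderiv ℝ ϑ x w v)
    -- theta(X) = 1 on B \ Pol:
    (hpair : ∀ x ∈ B \ Pol, ϑ x (genC2 x) = 1)
    (p : ℂ × ℂ) (hp : p ∈ B \ Pol) (hp0 : p ≠ 0) :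
    (∫ t in (0:ℝ)..(2 * π), ϑ (rotC2 t p) (genC2 (rotC2 t p))) = 2 * π ∧
    (∀ loop : Path (X := {x : ℂ × ℂ // x ∈ B \ Pol}) ⟨p, hp⟩ ⟨p, hp⟩,
      (∀ s : unitInterval, (loop s : ℂ × ℂ) = rotC2 (2 * π * s) p) →
      ¬ loop.Homotopic (Path.refl (⟨p, hp⟩ : {x : ℂ × ℂ // x ∈ B \ Pol}))) ∧
    Pol.Nonempty :=
  orbit_integral_eq_two_pi_and_not_nullhomotopic_general r Pol hPol B hB ϑ hdominv hϑdiff hclosed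
    hpair p hp
end
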